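/- For every x ∈ ℝ^m and every t ≥ 1, the integrals defining I_α(F - F_{1,t})(x) converge absolutely and I_α(F - F_{1,t})(x) ≥ 0. -/

import Mathlib

open scoped BigOperators
open MeasureTheory

noncomputable section

/-- The piecewise function `ψ` from Definition 1 of the paper. -/
def psi (t : ℝ) : ℝ :=
  if t ≤ -1 then -(1/2)
  else if t ≤ 0 then (t+1)^3 - (1/2)*(t+1)^4 - 1/2
  else t

/-- `χ̆(t) = 1 + ψ(t)`. -/
def chibreve (t : ℝ) : ℝ := 1 + psi t

/-- `χ_R(t) = R + χ(t-R)` where `χ(t) = -χ̆(-t)`; explicitly `χ_R(t) = R - χ̆(R-t)`. -/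
def chiR (R t : ℝ) : ℝ := R - chibreve (R - t)

/-- `F(x) = χ̆(⟨e, M⁻¹x⟩) = χ̆(∑ i, x_i/μ_i)`. -/
def Ffun (m : ℕ) (μ : Fin m → ℝ) (x : Fin m → ℝ) : ℝ := chibreve (∑ i, x i / μ i)

/-- The difference `F - F_{1,t}` where `F_{1,t} = χ_t ∘ F`. -/
def Fdiff (m : ℕ) (μ : Fin m → ℝ) (t : ℝ) (x : Fin m → ℝ) : ℝ :=
  Ffun m μ x - chiR t (Ffun m μ x)

/-- The anisotropic `α`-stable non-local operator
`I_α f(x) = ∑ i, ξ_i ∫_{ℝ∖{0}} (f(x + y e_i) - f(x) - y ∂_i f(x)) |y|^{-(1+α)} dy`. -/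
def Ialpha (m : ℕ) (α : ℝ) (ξ : Fin m → ℝ) (f : (Fin m → ℝ) → ℝ)
    (x : Fin m → ℝ) : ℝ :=
  ∑ i, ξ i * ∫ y : ℝ,
    (f (x + Pi.single i y) - f x - y * fderiv ℝ f x (Pi.single i 1)) / |y| ^ (1 + α)

/-- Absolute convergence of the integrals defining `I_α f(x)`. -/
def IalphaConv (m : ℕ) (α : ℝ) (f : (Fin m → ℝ) → ℝ) (x : Fin m → ℝ) : Prop :=
  ∀ i : Fin m, Integrable (fun y : ℝ =>
    (f (x + Pi.single i y) - f x - y * fderiv ℝ f x (Pi.single i 1)) / |y| ^ (1 + α))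


/-!
With `u = ∑ i, x i / μ i`, the function `F - F_{1,t}` is `G (u)` for the one-variable profile
`G u = χ̆ u - t + χ̆ (t - χ̆ u)`. The cubic-quartic piece makes `ψ` a `C²` function with
`0 ≤ ψ' ≤ 1` and `0 ≤ ψ'' ≤ 3/2`, so `G'' = ψ'' u (1 - ψ' (t - χ̆ u)) + (ψ' u)² ψ'' (t - χ̆ u)`
lies in `[0, 3]` and `|G'| ≤ 1`. Hence `G` is convex, which makes every integrand
`G (s + c y) - G s - c y G' s` nonnegative, and the integrand is at most a multiple of
`min (y², |y|)`, which is integrable against `|y|^{-(1+α)}` for `1 < α < 2`.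
-/

open Set

lemma hasDerivAt_ite_le {g h g' h' : ℝ → ℝ} {a : ℝ}
    (hg : ∀ v, HasDerivAt g (g' v) v) (hh : ∀ v, HasDerivAt h (h' v) v)
    (hgh : g a = h a) (hgh' : g' a = h' a) (v : ℝ) :
    HasDerivAt (fun w => if w ≤ a then g w else h w) (if v ≤ a then g' v else h' v) v := by
  rcases lt_trichotomy v a with hv | rfl | hv
  · rw [if_pos hv.le]
    refine (hg v).congr_of_eventuallyEq ?_
    filter_upwards [Iio_mem_nhds hv] with w hw
    rw [if_pos (le_of_lt hw)]
  · rw [if_pos le_rfl]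
    have hl : HasDerivWithinAt (fun w => if w ≤ v then g w else h w) (g' v) (Iic v) v :=
      (hg v).hasDerivWithinAt.congr (fun w hw => if_pos hw) (if_pos le_rfl)
    have hr : HasDerivWithinAt (fun w => if w ≤ v then g w else h w) (g' v) (Ici v) v := by
      rw [hgh']
      refine (hh v).hasDerivWithinAt.congr (fun w hw => ?_) (by rw [if_pos le_rfl, hgh])
      rcases (mem_Ici.1 hw).eq_or_lt with rfl | hw
      · rw [if_pos le_rfl, hgh]
      · rw [if_neg hw.not_ge]
    simpa only [Iic_union_Ici, hasDerivWithinAt_univ] using hl.union hr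
  · rw [if_neg hv.not_ge]
    refine (hh v).congr_of_eventuallyEq ?_
    filter_upwards [Ioi_mem_nhds hv] with w hw
    rw [if_neg (not_le.2 hw)]

def psiDeriv (v : ℝ) : ℝ :=
  if v ≤ -1 then 0
  else if v ≤ 0 then 3 * (v + 1) ^ 2 - 2 * (v + 1) ^ 3
  else 1

def psiDeriv2 (v : ℝ) : ℝ :=
  if v ≤ -1 then 0
  else if v ≤ 0 then -6 * v * (v + 1)
  else 0

lemma hasDerivAt_psi (v : ℝ) : HasDerivAt psi (psiDeriv v) v := by
  have hpoly (w : ℝ) : HasDerivAt (fun z : ℝ => (z + 1) ^ 3 - (1/2) * (z + 1) ^ 4 - 1/2)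
      (3 * (w + 1) ^ 2 - 2 * (w + 1) ^ 3) w := by
    refine ((((hasDerivAt_id' w).add_const 1).fun_pow 3).fun_sub
      ((((hasDerivAt_id' w).add_const 1).fun_pow 4).const_mul (1/2))).sub_const (1/2)
      |>.congr_deriv ?_
    norm_num
    ring
  exact hasDerivAt_ite_le (fun w => hasDerivAt_const w _)
    (hasDerivAt_ite_le hpoly hasDerivAt_id (by norm_num) (by norm_num)) (by norm_num)
    (by norm_num) v

lemma hasDerivAt_psiDeriv (v : ℝ) : HasDerivAt psiDeriv (psiDeriv2 v) v := by
  have hpoly (w : ℝ) : HasDerivAt (fun z : ℝ => 3 * (z + 1) ^ 2 - 2 * (z + 1) ^ 3)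
      (-6 * w * (w + 1)) w := by
    refine ((((hasDerivAt_id' w).add_const 1).fun_pow 2).const_mul 3).fun_sub
      ((((hasDerivAt_id' w).add_const 1).fun_pow 3).const_mul 2) |>.congr_deriv ?_
    norm_num
    ring
  exact hasDerivAt_ite_le (fun w => hasDerivAt_const w _)
    (hasDerivAt_ite_le hpoly (fun w => hasDerivAt_const w _) (by norm_num) (by norm_num))
    (by norm_num) (by norm_num) v

lemma psiDeriv_nonneg (v : ℝ) : 0 ≤ psiDeriv v := by
  unfold psiDeriv
  split_ifs <;> nlinarith

lemma psiDeriv_le_one (v : ℝ) : psiDeriv v ≤ 1 := by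
  unfold psiDeriv
  split_ifs
  · norm_num
  · nlinarith [mul_nonneg (sq_nonneg v) (by linarith : (0 : ℝ) ≤ 2 * v + 3)]
  · exact le_rfl

lemma psiDeriv2_nonneg (v : ℝ) : 0 ≤ psiDeriv2 v := by
  unfold psiDeriv2
  split_ifs <;> nlinarith

lemma psiDeriv2_le (v : ℝ) : psiDeriv2 v ≤ 3 / 2 := by
  unfold psiDeriv2
  split_ifs <;> nlinarith [sq_nonneg (2 * v + 1)]

lemma hasDerivAt_chibreve (v : ℝ) : HasDerivAt chibreve (psiDeriv v) v :=
  (hasDerivAt_psi v).const_add 1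

def fdiffProfile (t u : ℝ) : ℝ := chibreve u - t + chibreve (t - chibreve u)

def fdiffProfileDeriv (t u : ℝ) : ℝ := psiDeriv u * (1 - psiDeriv (t - chibreve u))

def fdiffProfileDeriv2 (t u : ℝ) : ℝ :=
  psiDeriv2 u * (1 - psiDeriv (t - chibreve u)) + psiDeriv u ^ 2 * psiDeriv2 (t - chibreve u)

lemma hasDerivAt_fdiffProfile (t u : ℝ) :
    HasDerivAt (fdiffProfile t) (fdiffProfileDeriv t u) u := by
  have hinner := (hasDerivAt_chibreve u).const_sub t
  refine ((hasDerivAt_chibreve u).sub_const t).add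
    ((hasDerivAt_chibreve (t - chibreve u)).comp u hinner) |>.congr_deriv ?_
  unfold fdiffProfileDeriv
  ring

lemma hasDerivAt_fdiffProfileDeriv (t u : ℝ) :
    HasDerivAt (fdiffProfileDeriv t) (fdiffProfileDeriv2 t u) u := by
  have hinner := (hasDerivAt_chibreve u).const_sub t
  refine (hasDerivAt_psiDeriv u).mul
    (((hasDerivAt_psiDeriv (t - chibreve u)).comp u hinner).const_sub 1) |>.congr_deriv ?_
  simp only [fdiffProfileDeriv2, Function.comp_apply]
  ring

lemma abs_fdiffProfileDeriv_le_one (t u : ℝ) : |fdiffProfileDeriv t u| ≤ 1 := by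
  have h₁ := psiDeriv_nonneg u
  have h₂ := psiDeriv_le_one u
  have h₃ := psiDeriv_nonneg (t - chibreve u)
  have h₄ := psiDeriv_le_one (t - chibreve u)
  unfold fdiffProfileDeriv
  rw [abs_le]
  constructor <;> nlinarith

lemma fdiffProfileDeriv2_nonneg (t u : ℝ) : 0 ≤ fdiffProfileDeriv2 t u :=
  add_nonneg (mul_nonneg (psiDeriv2_nonneg u) (sub_nonneg.2 (psiDeriv_le_one _)))
    (mul_nonneg (sq_nonneg _) (psiDeriv2_nonneg _))

lemma fdiffProfileDeriv2_le (t u : ℝ) : fdiffProfileDeriv2 t u ≤ 3 := by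
  have h₁ := psiDeriv_nonneg u
  have h₂ := psiDeriv_le_one u
  have h₃ := psiDeriv_nonneg (t - chibreve u)
  have h₄ := psiDeriv2_nonneg u
  have h₅ := psiDeriv2_le u
  have h₆ := psiDeriv2_nonneg (t - chibreve u)
  have h₇ := psiDeriv2_le (t - chibreve u)
  unfold fdiffProfileDeriv2
  nlinarith [mul_le_mul h₂ h₂ h₁ zero_le_one]

lemma monotone_fdiffProfileDeriv (t : ℝ) : Monotone (fdiffProfileDeriv t) :=
  monotone_of_hasDerivAt_nonneg (hasDerivAt_fdiffProfileDeriv t) (fdiffProfileDeriv2_nonneg t)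

section SecondDifference

variable {f f' f'' : ℝ → ℝ}

lemma deriv_mul_sub_le_sub_of_monotone (hf : ∀ v, HasDerivAt f (f' v) v) (hmono : Monotone f')
    (a b : ℝ) : f' a * (b - a) ≤ f b - f a := by
  have hcont : Continuous f := continuous_iff_continuousAt.2 fun v => (hf v).continuousAt
  rcases lt_trichotomy a b with hab | rfl | hab
  · obtain ⟨c, hc, hslope⟩ := exists_hasDerivAt_eq_slope f f' hab hcont.continuousOn
      (fun v _ => hf v)
    rw [eq_div_iff (sub_ne_zero.2 hab.ne')] at hslope
    rw [← hslope]
    exact mul_le_mul_of_nonneg_right (hmono hc.1.le) (sub_nonneg.2 hab.le)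
  · simp
  · obtain ⟨c, hc, hslope⟩ := exists_hasDerivAt_eq_slope f f' hab hcont.continuousOn
      (fun v _ => hf v)
    rw [eq_div_iff (sub_ne_zero.2 hab.ne')] at hslope
    nlinarith [hmono hc.2.le]

lemma sub_sub_mul_deriv_nonneg (hf : ∀ v, HasDerivAt f (f' v) v) (hmono : Monotone f')
    (s h : ℝ) : 0 ≤ f (s + h) - f s - h * f' s := by
  have := deriv_mul_sub_le_sub_of_monotone hf hmono s (s + h)
  rw [add_sub_cancel_left] at this
  linarith

lemma sub_sub_mul_deriv_le {K B : ℝ} (hf : ∀ v, HasDerivAt f (f' v) v)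
    (hf' : ∀ v, HasDerivAt f' (f'' v) v) (hf''_nonneg : ∀ v, 0 ≤ f'' v) (hf''_le : ∀ v, f'' v ≤ K)
    (hf'_abs : ∀ v, |f' v| ≤ B) (s h : ℝ) :
    f (s + h) - f s - h * f' s ≤ max K (2 * B) * min (h ^ 2) |h| := by
  have hmono := monotone_of_hasDerivAt_nonneg hf' hf''_nonneg
  have hincr : f (s + h) - f s - h * f' s ≤ (f' (s + h) - f' s) * h := by
    have := deriv_mul_sub_le_sub_of_monotone hf hmono (s + h) s
    rw [sub_add_cancel_left] at this
    linarith
  have hlip : |f' (s + h) - f' s| ≤ K * |h| := by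
    simpa using convex_univ.norm_image_sub_le_of_norm_hasDerivWithin_le
      (fun v _ => (hf' v).hasDerivWithinAt)
      (fun v _ => by rw [Real.norm_eq_abs, abs_of_nonneg (hf''_nonneg v)]; exact hf''_le v)
      (mem_univ s) (mem_univ (s + h))
  have hbdd : |f' (s + h) - f' s| ≤ 2 * B := by
    linarith [abs_sub (f' (s + h)) (f' s), hf'_abs (s + h), hf'_abs s]
  have hprod : (f' (s + h) - f' s) * h ≤ |f' (s + h) - f' s| * |h| := by
    rw [← abs_mul]
    exact le_abs_self _
  rcases le_total (h ^ 2) |h| with hmin | hmin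
  · rw [min_eq_left hmin]
    have : |f' (s + h) - f' s| * |h| ≤ K * h ^ 2 := by
      calc |f' (s + h) - f' s| * |h| ≤ K * |h| * |h| :=
            mul_le_mul_of_nonneg_right hlip (abs_nonneg h)
        _ = K * h ^ 2 := by rw [mul_assoc, abs_mul_abs_self, sq]
    nlinarith [le_max_left K (2 * B), sq_nonneg h]
  · rw [min_eq_right hmin]
    have : |f' (s + h) - f' s| * |h| ≤ 2 * B * |h| :=
      mul_le_mul_of_nonneg_right hbdd (abs_nonneg h)
    nlinarith [le_max_right K (2 * B), abs_nonneg h]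

end SecondDifference

section Integrability

variable {α : ℝ}

lemma min_sq_abs_div_rpow_le_of_pos {y : ℝ} (hy : 0 < y) :
    min (y ^ 2) |y| / |y| ^ (1 + α) ≤ y ^ (1 - α) ∧
      min (y ^ 2) |y| / |y| ^ (1 + α) ≤ y ^ (-α) := by
  rw [abs_of_pos hy]
  have hden : 0 < y ^ (1 + α) := Real.rpow_pos_of_pos hy _
  constructor
  · calc min (y ^ 2) y / y ^ (1 + α) ≤ y ^ 2 / y ^ (1 + α) := by gcongr; exact min_le_left _ _
      _ = y ^ (1 - α) := by
        rw [show 1 - α = (2 : ℝ) - (1 + α) by ring, Real.rpow_sub hy, Real.rpow_two]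
  · calc min (y ^ 2) y / y ^ (1 + α) ≤ y / y ^ (1 + α) := by gcongr; exact min_le_right _ _
      _ = y ^ (-α) := by
        rw [show -α = (1 : ℝ) - (1 + α) by ring, Real.rpow_sub hy, Real.rpow_one]

lemma integrableOn_Ioi_min_sq_abs_div_rpow (hα1 : 1 < α) (hα2 : α < 2) :
    IntegrableOn (fun y : ℝ => min (y ^ 2) |y| / |y| ^ (1 + α)) (Ioi 0) := by
  have hmeas : Measurable (fun y : ℝ => min (y ^ 2) |y| / |y| ^ (1 + α)) := by fun_prop
  rw [← Ioo_union_Ici_eq_Ioi zero_lt_one, integrableOn_union,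
    integrableOn_Ici_iff_integrableOn_Ioi]
  constructor
  · refine Integrable.mono' ((intervalIntegral.integrableOn_Ioo_rpow_iff (s := 1 - α) zero_lt_one).2
      (by linarith)) hmeas.aestronglyMeasurable.restrict ?_
    filter_upwards [ae_restrict_mem measurableSet_Ioo] with y hy
    rw [Real.norm_eq_abs, abs_of_nonneg (by positivity)]
    exact (min_sq_abs_div_rpow_le_of_pos hy.1).1
  · refine Integrable.mono' (integrableOn_Ioi_rpow_of_lt (a := -α) (by linarith) zero_lt_one)
      hmeas.aestronglyMeasurable.restrict ?_
    filter_upwards [ae_restrict_mem measurableSet_Ioi] with y hy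
    rw [Real.norm_eq_abs, abs_of_nonneg (by positivity)]
    exact (min_sq_abs_div_rpow_le_of_pos (zero_lt_one.trans hy)).2

lemma integrable_min_sq_abs_div_rpow (hα1 : 1 < α) (hα2 : α < 2) :
    Integrable (fun y : ℝ => min (y ^ 2) |y| / |y| ^ (1 + α)) := by
  have hpos := integrableOn_Ioi_min_sq_abs_div_rpow hα1 hα2
  have hneg : IntegrableOn (fun y : ℝ => min (y ^ 2) |y| / |y| ^ (1 + α)) (Iio 0) := by
    have := (show IntegrableOn _ (Ioi (-0 : ℝ)) by rwa [neg_zero]).comp_neg_Iio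
    simpa only [neg_sq, abs_neg] using this
  rw [← integrableOn_univ, ← Iio_union_Ici (a := 0), integrableOn_union,
    integrableOn_Ici_iff_integrableOn_Ioi]
  exact ⟨hneg, hpos⟩

lemma min_sq_abs_mul_le (c y : ℝ) :
    min ((c * y) ^ 2) |c * y| ≤ max (c ^ 2) |c| * min (y ^ 2) |y| := by
  rw [mul_pow, abs_mul, mul_min_of_nonneg _ _ (by positivity)]
  exact min_le_min (mul_le_mul_of_nonneg_right (le_max_left _ _) (sq_nonneg _))
    (mul_le_mul_of_nonneg_right (le_max_right _ _) (abs_nonneg _))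

theorem integrable_sub_sub_mul_deriv_div_rpow {f f' f'' : ℝ → ℝ} {K B : ℝ}
    (hf : ∀ v, HasDerivAt f (f' v) v) (hf' : ∀ v, HasDerivAt f' (f'' v) v)
    (hf''_nonneg : ∀ v, 0 ≤ f'' v) (hf''_le : ∀ v, f'' v ≤ K) (hf'_abs : ∀ v, |f' v| ≤ B)
    (hα1 : 1 < α) (hα2 : α < 2) (s c : ℝ) :
    Integrable (fun y => (f (s + c * y) - f s - c * y * f' s) / |y| ^ (1 + α)) := by
  have hcont : Continuous f := continuous_iff_continuousAt.2 fun v => (hf v).continuousAt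
  have hmono := monotone_of_hasDerivAt_nonneg hf' hf''_nonneg
  refine ((integrable_min_sq_abs_div_rpow hα1 hα2).const_mul
    (max K (2 * B) * max (c ^ 2) |c|)).mono' (by fun_prop : Measurable _).aestronglyMeasurable
    (.of_forall fun y => ?_)
  have hq_nonneg := sub_sub_mul_deriv_nonneg hf hmono s (c * y)
  have hq_le := sub_sub_mul_deriv_le hf hf' hf''_nonneg hf''_le hf'_abs s (c * y)
  have hK : 0 ≤ max K (2 * B) := (hf''_nonneg 0).trans ((hf''_le 0).trans (le_max_left _ _))
  rw [Real.norm_eq_abs, abs_of_nonneg (div_nonneg hq_nonneg (by positivity)), ← mul_div_assoc,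
    mul_assoc (max K (2 * B))]
  exact div_le_div_of_nonneg_right
    (hq_le.trans (mul_le_mul_of_nonneg_left (min_sq_abs_mul_le c y) hK)) (by positivity)

end Integrability

def weightedSum {m : ℕ} (μ : Fin m → ℝ) : (Fin m → ℝ) →L[ℝ] ℝ :=
  ∑ i, (μ i)⁻¹ • ContinuousLinearMap.proj i

lemma weightedSum_apply {m : ℕ} (μ z : Fin m → ℝ) : weightedSum μ z = ∑ i, z i / μ i := by
  simp [weightedSum, div_eq_inv_mul]

lemma weightedSum_single {m : ℕ} (μ : Fin m → ℝ) (i : Fin m) (y : ℝ) :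
    weightedSum μ (Pi.single i y) = (μ i)⁻¹ * y := by
  simp [weightedSum_apply, Pi.single_apply, div_eq_inv_mul]

lemma Fdiff_eq_comp (m : ℕ) (μ : Fin m → ℝ) (t : ℝ) :
    Fdiff m μ t = fdiffProfile t ∘ weightedSum μ := by
  funext z
  simp only [Function.comp_apply, weightedSum_apply, Fdiff, Ffun, chiR, fdiffProfile]
  ring

lemma Fdiff_add_single_sub_sub (m : ℕ) (μ : Fin m → ℝ) (t : ℝ) (x : Fin m → ℝ) (i : Fin m)
    (y : ℝ) :
    Fdiff m μ t (x + Pi.single i y) - Fdiff m μ t x - y * fderiv ℝ (Fdiff m μ t) x (Pi.single i 1)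
      = fdiffProfile t (weightedSum μ x + (μ i)⁻¹ * y) - fdiffProfile t (weightedSum μ x)
        - (μ i)⁻¹ * y * fdiffProfileDeriv t (weightedSum μ x) := by
  have hderiv : HasFDerivAt (Fdiff m μ t)
      (fdiffProfileDeriv t (weightedSum μ x) • weightedSum μ) x := by
    rw [Fdiff_eq_comp]
    exact (hasDerivAt_fdiffProfile t _).comp_hasFDerivAt x (weightedSum μ).hasFDerivAt
  rw [hderiv.fderiv, Fdiff_eq_comp]
  simp only [Function.comp_apply, map_add, smul_apply, weightedSum_single, smul_eq_mul]
  ring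

theorem stmt_11_general (m : ℕ) (μ ξ : Fin m → ℝ)
    (hξ : ∀ i, 0 < ξ i)
    (α : ℝ) (hα1 : 1 < α) (hα2 : α < 2)
    (x : Fin m → ℝ) (t : ℝ) :
    IalphaConv m α (Fdiff m μ t) x ∧ 0 ≤ Ialpha m α ξ (Fdiff m μ t) x := by
  unfold IalphaConv Ialpha
  simp_rw [Fdiff_add_single_sub_sub]
  refine ⟨fun i => ?_, Finset.sum_nonneg fun i _ => mul_nonneg (hξ i).le
    (integral_nonneg fun y => div_nonneg ?_ (by positivity))⟩
  · exact integrable_sub_sub_mul_deriv_div_rpow (hasDerivAt_fdiffProfile t)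
      (hasDerivAt_fdiffProfileDeriv t) (fdiffProfileDeriv2_nonneg t) (fdiffProfileDeriv2_le t)
      (abs_fdiffProfileDeriv_le_one t) hα1 hα2 _ _
  · exact sub_sub_mul_deriv_nonneg (hasDerivAt_fdiffProfile t) (monotone_fdiffProfileDeriv t) _ _

/-- For every `x ∈ ℝ^m` and `t ≥ 1`, the integrals defining `I_α(F - F_{1,t})(x)`
converge absolutely, and `I_α(F - F_{1,t})(x) ≥ 0`. -/
theorem stmt_11 (m : ℕ) (hm : 1 ≤ m) (μ ξ : Fin m → ℝ)
    (hμ : ∀ i, 0 < μ i) (hξ : ∀ i, 0 < ξ i)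
    (α : ℝ) (hα1 : 1 < α) (hα2 : α < 2)
    (x : Fin m → ℝ) (t : ℝ) (ht : 1 ≤ t) :
    IalphaConv m α (Fdiff m μ t) x ∧ 0 ≤ Ialpha m α ξ (Fdiff m μ t) x :=
  stmt_11_general m μ ξ hξ α hα1 hα2 x t

end
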